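/- Let P be a weighted finite set of points and L a weighted finite set of lines in ℝ², with positive integer weights w. Define |A|₁ = Σ w(a), |A|₂² = Σ w(a)², |A|_∞ = max w(a), and the weighted incidence count I(P,L) = Σ_{p∈P} Σ_{ℓ∈L} [p∈ℓ] w(p)w(ℓ). Then I(P,L) = O((|P|₂² |P|₁ |L|₂² |L|₁)^{1/3} + |L|_∞ |P|₁ + |P|_∞ |L|₁), assuming the Szemerédi–Trotter theorem for unweighted points and lines. -/

import Mathlib

/-!
Decompose the weights into layers: with `P_k = {p ∈ P | k < w p}` and `L_l` likewise, the weighted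
incidence count is `∑_{k,l} I(P_k, L_l)`. The unweighted bound on each pair of layers sums to
`(∑_k |P_k|^{2/3}) (∑_l |L_l|^{2/3}) + |L|_∞ |P|₁ + |P|_∞ |L|₁`. For a weighted set `A`,
`|A_k| ≤ min (|A|₁ / (k+1), |A|₂² / (k+1)²)`; splitting the sum at `k ≈ |A|₂² / |A|₁` and comparing
with differences of cube roots gives `∑_k |A_k|^{2/3} ≤ 9 (|A|₂² |A|₁)^{1/3}`.
-/

open scoped Classical

noncomputable section

abbrev Plane := EuclideanSpace ℝ (Fin 2)

def IsLine (L : Set Plane) : Prop :=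
  ∃ (v : Plane) (t : ℝ), v ≠ 0 ∧ L = {x | (inner ℝ v x : ℝ) = t}

open Finset

theorem one_le_three_mul_sq_mul_sub {u v : ℝ} (hv : 0 ≤ v) (hvu : v ≤ u)
    (h : u ^ 3 = v ^ 3 + 1) : 1 ≤ 3 * u ^ 2 * (u - v) := by
  nlinarith [mul_nonneg (mul_self_nonneg (u - v)) (by linarith : 0 ≤ 2 * u + v)]

theorem one_le_three_mul_pow_four_mul_inv_sub {u v : ℝ} (hv : 0 < v) (hvu : v ≤ u)
    (h : u ^ 3 = v ^ 3 + 1) : 1 ≤ 3 * u ^ 4 * (v⁻¹ - u⁻¹) := by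
  have hu : u ≠ 0 := (hv.trans_le hvu).ne'
  calc (1 : ℝ) ≤ 3 * u ^ 2 * (u - v) := one_le_three_mul_sq_mul_sub hv.le hvu h
    _ ≤ 3 * u ^ 2 * (u - v) * (u / v) := by
        refine le_mul_of_one_le_right (by nlinarith) ?_
        rwa [one_le_div hv]
    _ = 3 * u ^ 4 * (v⁻¹ - u⁻¹) := by field_simp

/-- Think of `b k` as `|A_k|^{1/3}` and of `c` as the cube root. Below `M = ⌊(t/s)³⌋` the first
bound is used and the sum telescopes against `c (k + 1) - c k`; above `M` the second one, against
`(c k)⁻¹ - (c (k + 1))⁻¹`. -/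
theorem sum_sq_le_of_mul_cbrt_le {b c : ℕ → ℝ} {s t : ℝ}
    (hc3 : ∀ n, c n ^ 3 = n) (hs : 0 ≤ s) (hst : s ≤ t)
    (hb : ∀ k, 0 ≤ b k) (hbs : ∀ k, b k * c (k + 1) ≤ s) (hbt : ∀ k, b k * c (k + 1) ^ 2 ≤ t)
    (N : ℕ) : ∑ k ∈ range N, b k ^ 2 ≤ 9 * (s * t) := by
  have hc (n : ℕ) : 0 ≤ c n := (Odd.pow_nonneg_iff (n := 3) (by decide)).1 (by rw [hc3]; positivity)
  have hc_step (n : ℕ) : c (n + 1) ^ 3 = c n ^ 3 + 1 := by rw [hc3, hc3]; push_cast; ring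
  have hc_mono {m n : ℕ} (h : m ≤ n) : c m ≤ c n := by
    rw [← pow_le_pow_iff_left₀ (hc m) (hc n) three_ne_zero, hc3, hc3]
    exact_mod_cast h
  have hc_pos {n : ℕ} (h : 1 ≤ n) : 0 < c n := by
    refine lt_of_pow_lt_pow_left₀ 3 (hc n) ?_
    rw [hc3, zero_pow three_ne_zero]
    exact_mod_cast h
  have hc_zero : c 0 = 0 := pow_eq_zero_iff three_ne_zero |>.1 (by rw [hc3]; simp)
  rcases hs.eq_or_lt with rfl | hs
  · have hb0 (k : ℕ) : b k = 0 :=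
      le_antisymm (nonpos_of_mul_nonpos_left (hbs k) (hc_pos k.succ_pos)) (hb k)
    simp [hb0]
  set r := t / s with hr_def
  have hr : 1 ≤ r := (one_le_div hs).2 hst
  set M := ⌊r ^ 3⌋₊
  have hM : 1 ≤ M := Nat.le_floor (by simpa using one_le_pow₀ hr)
  have hcM_le : c M ≤ r := by
    rw [← pow_le_pow_iff_left₀ (hc M) (by linarith) three_ne_zero, hc3]
    exact Nat.floor_le (by positivity)
  have hr_le : r ≤ 2 * c M := by
    rw [← pow_le_pow_iff_left₀ (by linarith) (by linarith [hc M]) three_ne_zero, mul_pow, hc3]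
    have : (1 : ℝ) ≤ M := by exact_mod_cast hM
    linarith [Nat.lt_floor_add_one (r ^ 3)]
  have head : ∑ k ∈ range M, b k ^ 2 ≤ 3 * (s * t) := by
    calc ∑ k ∈ range M, b k ^ 2 ≤ ∑ k ∈ range M, 3 * s ^ 2 * (c (k + 1) - c k) := by
          refine sum_le_sum fun k _ => ?_
          have key := one_le_three_mul_sq_mul_sub (hc k) (hc_mono k.le_succ) (hc_step k)
          have hbs' : (b k * c (k + 1)) ^ 2 ≤ s ^ 2 :=
            pow_le_pow_left₀ (mul_nonneg (hb k) (hc _)) (hbs k) 2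
          have hd : 0 ≤ c (k + 1) - c k := sub_nonneg.2 (hc_mono k.le_succ)
          nlinarith [sq_nonneg (b k)]
      _ = 3 * s ^ 2 * c M := by
          rw [← mul_sum, sum_range_sub, hc_zero, sub_zero]
      _ ≤ 3 * s ^ 2 * r := by gcongr
      _ = 3 * (s * t) := by rw [hr_def]; field_simp
  have tail : ∑ k ∈ range N, b (M + k) ^ 2 ≤ 6 * (s * t) := by
    have hcM : 0 < c M := hc_pos hM
    calc ∑ k ∈ range N, b (M + k) ^ 2
        ≤ ∑ k ∈ range N, 3 * t ^ 2 * ((c (M + k))⁻¹ - (c (M + k + 1))⁻¹) := by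
          refine sum_le_sum fun k _ => ?_
          have key := one_le_three_mul_pow_four_mul_inv_sub (hc_pos (hM.trans (M.le_add_right k)))
            (hc_mono (M + k).le_succ) (hc_step (M + k))
          have hbt' : (b (M + k) * c (M + k + 1) ^ 2) ^ 2 ≤ t ^ 2 :=
            pow_le_pow_left₀ (mul_nonneg (hb _) (sq_nonneg _)) (hbt _) 2
          have hd : 0 ≤ (c (M + k))⁻¹ - (c (M + k + 1))⁻¹ :=
            sub_nonneg.2 <| inv_anti₀ (hc_pos (hM.trans (M.le_add_right k)))
              (hc_mono (M + k).le_succ)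
          nlinarith [sq_nonneg (b (M + k))]
      _ = 3 * t ^ 2 * ((c M)⁻¹ - (c (M + N))⁻¹) := by
          rw [← mul_sum]
          exact congrArg _ (sum_range_sub' (fun k => (c (M + k))⁻¹) N)
      _ ≤ 3 * t ^ 2 * (2 / r) := by
          gcongr
          calc (c M)⁻¹ - (c (M + N))⁻¹ ≤ (c M)⁻¹ := sub_le_self _ (inv_nonneg.2 (hc _))
            _ ≤ 2 / r := by rw [inv_le_iff_one_le_mul₀ hcM]; field_simp; linarith
      _ = 6 * (s * t) := by rw [hr_def]; field_simp; ring
  calc ∑ k ∈ range N, b k ^ 2 ≤ ∑ k ∈ range (M + N), b k ^ 2 :=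
        sum_le_sum_of_subset_of_nonneg (range_subset_range.2 (N.le_add_left M))
          fun k _ _ => sq_nonneg _
    _ = ∑ k ∈ range M, b k ^ 2 + ∑ k ∈ range N, b (M + k) ^ 2 := sum_range_add _ _ _
    _ ≤ 9 * (s * t) := by linarith

def weightLayer {α : Type*} (A : Finset α) (w : α → ℕ) (k : ℕ) : Finset α := {a ∈ A | k < w a}

theorem sum_nsmul_eq_sum_weightLayer {α M : Type*} [AddCommMonoid M] (A : Finset α)
    (w : α → ℕ) (g : α → M) :
    ∑ a ∈ A, w a • g a = ∑ k ∈ range (A.sup w), ∑ a ∈ weightLayer A w k, g a := by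
  simp only [weightLayer, sum_filter]
  rw [sum_comm]
  refine sum_congr rfl fun a ha => ?_
  have hlt : {k ∈ range (A.sup w) | k < w a} = range (w a) := by
    ext k
    simp only [mem_filter, mem_range]
    have := le_sup (f := w) ha
    omega
  rw [← sum_filter, hlt, sum_const, card_range]

theorem sum_card_weightLayer {α : Type*} (A : Finset α) (w : α → ℕ) :
    ∑ k ∈ range (A.sup w), (#(weightLayer A w k) : ℝ) = ∑ a ∈ A, (w a : ℝ) := by
  simpa [nsmul_eq_mul] using (sum_nsmul_eq_sum_weightLayer A w fun _ => (1 : ℝ)).symm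

theorem sum_sum_mul_mul_eq_sum_weightLayer {α β : Type*} (A : Finset α) (B : Finset β)
    (wA : α → ℕ) (wB : β → ℕ) (f : α → β → ℝ) :
    ∑ a ∈ A, ∑ b ∈ B, (wA a : ℝ) * wB b * f a b =
      ∑ k ∈ range (A.sup wA), ∑ l ∈ range (B.sup wB),
        ∑ a ∈ weightLayer A wA k, ∑ b ∈ weightLayer B wB l, f a b := by
  calc ∑ a ∈ A, ∑ b ∈ B, (wA a : ℝ) * wB b * f a b
      = ∑ a ∈ A, wA a • ∑ b ∈ B, wB b • f a b := by simp only [nsmul_eq_mul, mul_sum, mul_assoc]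
    _ = ∑ k ∈ range (A.sup wA), ∑ a ∈ weightLayer A wA k, ∑ l ∈ range (B.sup wB),
          ∑ b ∈ weightLayer B wB l, f a b := by
        simp only [sum_nsmul_eq_sum_weightLayer]
    _ = _ := sum_congr rfl fun k _ => sum_comm

theorem pow_mul_card_weightLayer_le {α : Type*} (A : Finset α) (w : α → ℕ) (k e : ℕ) :
    ((k : ℝ) + 1) ^ e * #(weightLayer A w k) ≤ ∑ a ∈ A, (w a : ℝ) ^ e := by
  calc ((k : ℝ) + 1) ^ e * #(weightLayer A w k)
      = ∑ _a ∈ weightLayer A w k, ((k : ℝ) + 1) ^ e := by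
        rw [sum_const, nsmul_eq_mul, mul_comm]
    _ ≤ ∑ a ∈ weightLayer A w k, (w a : ℝ) ^ e := by
        refine sum_le_sum fun a ha => pow_le_pow_left₀ (by positivity) ?_ e
        exact_mod_cast (mem_filter.1 ha).2
    _ ≤ ∑ a ∈ A, (w a : ℝ) ^ e :=
        sum_le_sum_of_subset_of_nonneg (filter_subset _ _) fun _ _ _ => by positivity

theorem rpow_one_div_three_pow_three {x : ℝ} (hx : 0 ≤ x) : (x ^ ((1 : ℝ) / 3)) ^ 3 = x := by
  rw [one_div]
  exact_mod_cast Real.rpow_inv_natCast_pow hx three_ne_zero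

theorem rpow_two_div_three_eq_sq {x : ℝ} (hx : 0 ≤ x) :
    x ^ ((2 : ℝ) / 3) = (x ^ ((1 : ℝ) / 3)) ^ 2 := by
  rw [← Real.rpow_natCast, ← Real.rpow_mul hx]
  norm_num

theorem sum_card_weightLayer_rpow_le {α : Type*} (A : Finset α) (w : α → ℕ) :
    ∑ k ∈ range (A.sup w), (#(weightLayer A w k) : ℝ) ^ ((2 : ℝ) / 3) ≤
      9 * ((∑ a ∈ A, (w a : ℝ) ^ 2) * ∑ a ∈ A, (w a : ℝ)) ^ ((1 : ℝ) / 3) := by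
  set S₁ := ∑ a ∈ A, (w a : ℝ)
  set S₂ := ∑ a ∈ A, (w a : ℝ) ^ 2
  have hS₁ : 0 ≤ S₁ := sum_nonneg fun _ _ => by positivity
  have hS₁₂ : S₁ ≤ S₂ := sum_le_sum fun a _ => by
    rcases (w a).eq_zero_or_pos with h | h
    · simp [h]
    · exact le_self_pow₀ (by exact_mod_cast h) two_ne_zero
  have cube_le {x y : ℝ} (hx : 0 ≤ x) (hy : 0 ≤ y) (h : x ^ 3 ≤ y ^ 3) : x ≤ y :=
    (pow_le_pow_iff_left₀ hx hy three_ne_zero).1 h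
  set b : ℕ → ℝ := fun k => (#(weightLayer A w k) : ℝ) ^ ((1 : ℝ) / 3)
  set c : ℕ → ℝ := fun n => (n : ℝ) ^ ((1 : ℝ) / 3)
  have hbs (k : ℕ) : b k * c (k + 1) ≤ S₁ ^ ((1 : ℝ) / 3) := by
    refine cube_le (by positivity) (by positivity) ?_
    simp only [b, c, mul_pow, rpow_one_div_three_pow_three, Nat.cast_nonneg, hS₁]
    push_cast
    simpa [mul_comm] using pow_mul_card_weightLayer_le A w k 1
  have hbt (k : ℕ) : b k * c (k + 1) ^ 2 ≤ S₂ ^ ((1 : ℝ) / 3) := by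
    refine cube_le (by positivity) (by positivity) ?_
    rw [mul_pow, ← pow_mul, mul_comm 2 3, pow_mul]
    simp only [b, c, rpow_one_div_three_pow_three, Nat.cast_nonneg, hS₁.trans hS₁₂]
    push_cast
    simpa [mul_comm] using pow_mul_card_weightLayer_le A w k 2
  have key := sum_sq_le_of_mul_cbrt_le (fun n => rpow_one_div_three_pow_three n.cast_nonneg)
    (by positivity) (Real.rpow_le_rpow hS₁ hS₁₂ (by norm_num)) (fun k => by positivity) hbs hbt
    (A.sup w)
  calc ∑ k ∈ range (A.sup w), (#(weightLayer A w k) : ℝ) ^ ((2 : ℝ) / 3)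
      = ∑ k ∈ range (A.sup w), ((#(weightLayer A w k) : ℝ) ^ ((1 : ℝ) / 3)) ^ 2 :=
        sum_congr rfl fun k _ => rpow_two_div_three_eq_sq (Nat.cast_nonneg _)
    _ ≤ 9 * (S₁ ^ ((1 : ℝ) / 3) * S₂ ^ ((1 : ℝ) / 3)) := key
    _ = 9 * (S₂ * S₁) ^ ((1 : ℝ) / 3) := by
        rw [Real.mul_rpow (hS₁.trans hS₁₂) hS₁, mul_comm (S₁ ^ _)]

theorem sum_sum_card_weightLayer {α β : Type*} (A : Finset α) (B : Finset β)
    (wA : α → ℕ) (wB : β → ℕ) :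
    ∑ k ∈ range (A.sup wA), ∑ l ∈ range (B.sup wB),
        ((#(weightLayer A wA k) : ℝ) ^ ((2 : ℝ) / 3) *
            (#(weightLayer B wB l) : ℝ) ^ ((2 : ℝ) / 3) +
          #(weightLayer A wA k) + #(weightLayer B wB l)) =
      (∑ k ∈ range (A.sup wA), (#(weightLayer A wA k) : ℝ) ^ ((2 : ℝ) / 3)) *
          (∑ l ∈ range (B.sup wB), (#(weightLayer B wB l) : ℝ) ^ ((2 : ℝ) / 3)) +
        ((B.sup wB : ℕ) : ℝ) * ∑ a ∈ A, (wA a : ℝ) +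
          ((A.sup wA : ℕ) : ℝ) * ∑ b ∈ B, (wB b : ℝ) := by
  simp only [sum_add_distrib, sum_const, card_range, nsmul_eq_mul, sum_mul_sum, ← mul_sum,
    sum_card_weightLayer]

/-- Weighted Szemerédi–Trotter: assuming the unweighted Szemerédi–Trotter theorem, for weighted
points `P` and weighted lines `L` with positive integer weights, the number of weighted
incidences is `O((|P|₂²|P|₁|L|₂²|L|₁)^{1/3} + |L|_∞|P|₁ + |P|_∞|L|₁)`. -/
theorem weighted_szemeredi_trotter
    (hST : ∃ C₀ > (0:ℝ), ∀ (P : Finset Plane) (L : Finset (Set Plane)),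
      (∀ ℓ ∈ L, IsLine ℓ) →
      ((∑ p ∈ P, ∑ ℓ ∈ L, if p ∈ ℓ then 1 else 0 : ℝ)) ≤
        C₀ * ((P.card : ℝ) ^ ((2:ℝ)/3) * (L.card : ℝ) ^ ((2:ℝ)/3) + P.card + L.card)) :
    ∃ C > (0:ℝ), ∀ (P : Finset Plane) (L : Finset (Set Plane))
      (wP : Plane → ℕ) (wL : Set Plane → ℕ),
      (∀ ℓ ∈ L, IsLine ℓ) → (∀ p ∈ P, 0 < wP p) → (∀ ℓ ∈ L, 0 < wL ℓ) →
      ((∑ p ∈ P, ∑ ℓ ∈ L, if p ∈ ℓ then (wP p : ℝ) * wL ℓ else 0)) ≤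
        C * ((((∑ p ∈ P, (wP p : ℝ)^2) * (∑ p ∈ P, (wP p : ℝ)) *
              (∑ ℓ ∈ L, (wL ℓ : ℝ)^2) * (∑ ℓ ∈ L, (wL ℓ : ℝ))) ^ ((1:ℝ)/3)) +
            ((L.sup wL : ℕ) : ℝ) * (∑ p ∈ P, (wP p : ℝ)) +
            ((P.sup wP : ℕ) : ℝ) * (∑ ℓ ∈ L, (wL ℓ : ℝ))) := by
  obtain ⟨C₀, hC₀, hST⟩ := hST
  refine ⟨81 * C₀, by positivity, fun P L wP wL hL _ _ => ?_⟩
  have hlayers : (∑ k ∈ range (P.sup wP), (#(weightLayer P wP k) : ℝ) ^ ((2 : ℝ) / 3)) *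
      (∑ l ∈ range (L.sup wL), (#(weightLayer L wL l) : ℝ) ^ ((2 : ℝ) / 3)) ≤
      81 * ((∑ p ∈ P, (wP p : ℝ) ^ 2) * (∑ p ∈ P, (wP p : ℝ)) *
        (∑ ℓ ∈ L, (wL ℓ : ℝ) ^ 2) * (∑ ℓ ∈ L, (wL ℓ : ℝ))) ^ ((1 : ℝ) / 3) := by
    rw [mul_assoc _ (∑ ℓ ∈ L, _), Real.mul_rpow (by positivity) (by positivity)]
    refine (mul_le_mul (sum_card_weightLayer_rpow_le P wP) (sum_card_weightLayer_rpow_le L wL)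
      (sum_nonneg fun _ _ => by positivity) (by positivity)).trans_eq ?_
    ring
  calc (∑ p ∈ P, ∑ ℓ ∈ L, if p ∈ ℓ then (wP p : ℝ) * wL ℓ else 0)
      = ∑ k ∈ range (P.sup wP), ∑ l ∈ range (L.sup wL),
          ∑ p ∈ weightLayer P wP k, ∑ ℓ ∈ weightLayer L wL l, if p ∈ ℓ then 1 else 0 := by
        simp only [← sum_sum_mul_mul_eq_sum_weightLayer, mul_ite, mul_one, mul_zero]
    _ ≤ ∑ k ∈ range (P.sup wP), ∑ l ∈ range (L.sup wL),
          C₀ * ((#(weightLayer P wP k) : ℝ) ^ ((2 : ℝ) / 3) *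
            (#(weightLayer L wL l) : ℝ) ^ ((2 : ℝ) / 3) +
            #(weightLayer P wP k) + #(weightLayer L wL l)) :=
        sum_le_sum fun k _ => sum_le_sum fun l _ =>
          hST _ _ fun ℓ hℓ => hL ℓ (filter_subset _ _ hℓ)
    _ ≤ _ := by
        have hP₁ : 0 ≤ ((L.sup wL : ℕ) : ℝ) * ∑ p ∈ P, (wP p : ℝ) := by positivity
        have hL₁ : 0 ≤ ((P.sup wP : ℕ) : ℝ) * ∑ ℓ ∈ L, (wL ℓ : ℝ) := by positivity
        simp only [← mul_sum, sum_sum_card_weightLayer]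
        nlinarith [mul_le_mul_of_nonneg_left hlayers hC₀.le, mul_nonneg hC₀.le hP₁,
          mul_nonneg hC₀.le hL₁]
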